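/- arXiv:math/9405204 — 3 statements merged into one kernel-verified Lean document; each statement's English description precedes it below -/
import Mathlib

section
/- If X is a finite, nonempty type and f : X → X ⊕ Unit is any function, then there exists an element of X ⊕ Unit that is not in the range of f. (Strong dual pigeonhole principle for X + 1, conjectured by Bénabou and Loiseau.) -/
theorem exists_notMem_range_of_natCard_lt {α β : Type*} [Finite α] (f : α → β)
    (h : Nat.card α < Nat.card β) : ∃ y, y ∉ Set.range f := by
  by_contra! hf
  exact (Nat.card_le_card_of_surjective f hf).not_gt h

theorem strong_dual_pigeonhole_sum_general {X : Type*} [Finite X]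
    (f : X → X ⊕ Unit) : ∃ y : X ⊕ Unit, y ∉ Set.range f :=
  exists_notMem_range_of_natCard_lt f (by simp [Nat.card_sum])

/-- Strong dual pigeonhole principle for `X + 1`: if `X` is finite and nonempty, then
no `f : X → X ⊕ Unit` is surjective; in fact some element is outside the range of `f`. -/
theorem strong_dual_pigeonhole_sum {X : Type*} [Finite X] [Nonempty X]
    (f : X → X ⊕ Unit) : ∃ y : X ⊕ Unit, y ∉ Set.range f :=
  strong_dual_pigeonhole_sum_general f
end

section
/- If X is a finite, nonempty type and f : X → X × Bool is any function, then there exists an element of X × Bool that is not in the range of f. (Strong dual pigeonhole principle for X × 2, conjectured by Bénabou and Loiseau.) -/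
theorem Nat.card_lt_card_prod_of_one_lt_card {X Y : Type*} [Nonempty X] [Finite X]
    (hY : 1 < Nat.card Y) : Nat.card X < Nat.card (X × Y) := by
  rw [Nat.card_prod]
  exact lt_mul_of_one_lt_right Nat.card_pos hY

/-- Strong dual pigeonhole principle for `X × 2`: if `X` is finite and nonempty, then
for any `f : X → X × Bool` some element of `X × Bool` is outside the range of `f`. -/
theorem strong_dual_pigeonhole_prod {X : Type*} [Finite X] [Nonempty X]
    (f : X → X × Bool) : ∃ y : X × Bool, y ∉ Set.range f := by
  have hcard : Nat.card X < Nat.card (X × Bool) :=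
    Nat.card_lt_card_prod_of_one_lt_card (by simp)
  by_contra! hsurj
  exact hcard.not_ge (Nat.card_le_card_of_surjective f hsurj)
end

section
/- Assume that for every type U, every finite subset B of U, every subset A ⊆ B, and every function f : A → A ⊕ Unit (where A is viewed as the subtype of elements of A), there is an element of A ⊕ Unit not in the range of f. Then the law of the excluded middle holds: for every proposition p, either p or not p. -/
/-- The strong dual pigeonhole principle for subsets of finite sets implies the law
of the excluded middle. -/
theorem strong_dual_pigeonhole_subsets_implies_em
    (h : ∀ (U : Type) (B : Set U), B.Finite → ∀ A : Set U, A ⊆ B →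
      ∀ f : A → (A ⊕ Unit), ∃ y : (A ⊕ Unit), y ∉ Set.range f) :
    ∀ p : Prop, p ∨ ¬ p := by
  intro p
  obtain ⟨y, hy⟩ := h Bool Set.univ Set.finite_univ {x | x = true ∨ p} (Set.subset_univ _)
    (fun a => if a.val = true then Sum.inl ⟨true, Or.inl rfl⟩ else Sum.inr ())
  match y with
  | Sum.inl ⟨true, _⟩ => exact absurd ⟨⟨true, Or.inl rfl⟩, by simp⟩ hy
  | Sum.inl ⟨false, hx⟩ => exact Or.inl (hx.resolve_left (by simp))
  | Sum.inr () => exact Or.inr fun hp => hy ⟨⟨false, Or.inr hp⟩, by simp⟩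
end
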